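/- Let σ>1. (i) For every τ>0 and h>0 there exist H>0, C>0 and k₀ > e^e such that exp(−T_{τ,σ,h}(k)) ≤ C · k^{−H (ln k / ln(ln k))^{1/(σ-1)}} for all k ≥ k₀. (ii) Conversely, for every H>0 there exist τ>0, h>0, C>0 and k₀ > e^e such that k^{−H (ln k / ln(ln k))^{1/(σ-1)}} ≤ C · exp(−T_{τ,σ,h}(k)) for all k ≥ k₀. -/

import Mathlib

/-- The associated function `T_{τ,σ,h}(k) = sup_{p∈ℕ} ln(h^{p^σ} k^p / p^{τ p^σ})`,
with the `p = 0` term interpreted as `0`. -/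
noncomputable def AssocT (τ σ h k : ℝ) : ℝ :=
  ⨆ p : ℕ, Real.log (h ^ ((p : ℝ) ^ σ) * k ^ p / (p : ℝ) ^ (τ * (p : ℝ) ^ σ))

private lemma logB_le_half {B : ℝ} (hB : 2 ≤ B) : Real.log B ≤ B / 2 := by
  have h0 : (0:ℝ) < B := by linarith
  have hs : Real.sqrt B ^ 2 = B := Real.sq_sqrt h0.le
  have h1 : Real.log (Real.sqrt B) ≤ Real.sqrt B - 1 :=
    Real.log_le_sub_one_of_pos (Real.sqrt_pos.mpr h0)
  have h2 : Real.log B = 2 * Real.log (Real.sqrt B) := by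
    conv_lhs => rw [← hs]
    rw [Real.log_pow]
    push_cast
    ring
  nlinarith [sq_nonneg (Real.sqrt B - 2), Real.sqrt_nonneg B]

private lemma term_eq {h k : ℝ} (τ σ : ℝ) (hh : 0 < h) (hk : 0 < k) {p : ℕ} (hp : p ≠ 0) :
    Real.log (h ^ ((p : ℝ) ^ σ) * k ^ p / (p : ℝ) ^ (τ * (p : ℝ) ^ σ)) =
      (p : ℝ) * Real.log k + (p : ℝ) ^ σ * Real.log h - τ * (p : ℝ) ^ σ * Real.log p := by
  have hp0 : (0:ℝ) < (p:ℝ) := by exact_mod_cast Nat.pos_of_ne_zero hp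
  rw [Real.log_div (by positivity) (by positivity), Real.log_mul (by positivity) (by positivity),
    Real.log_rpow hh, Real.log_pow, Real.log_rpow hp0]
  ring

private lemma term_zero {σ : ℝ} (hσ : σ ≠ 0) (τ h k : ℝ) :
    Real.log (h ^ (((0:ℕ) : ℝ) ^ σ) * k ^ (0:ℕ) / ((0:ℕ) : ℝ) ^ (τ * ((0:ℕ) : ℝ) ^ σ)) = 0 := by
  simp [Real.zero_rpow hσ]

/-- Facts about `x = (A/B)^(1/(σ-1))` when `A = exp B`, `B ≥ 2`. -/
private lemma x_facts {σ A B : ℝ} (hσ : 1 < σ) (hB2 : 2 ≤ B) (hA : A = Real.exp B) :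
    0 < A ∧ 0 < A / B ∧ B / 2 ≤ Real.log (A / B) ∧ Real.log (A / B) ≤ B ∧
      0 < (A / B) ^ (1 / (σ - 1)) ∧
      (σ - 1) * Real.log ((A / B) ^ (1 / (σ - 1))) = Real.log (A / B) ∧
      ((A / B) ^ (1 / (σ - 1))) ^ (σ - 1) = A / B := by
  have hσ1 : (0:ℝ) < σ - 1 := by linarith
  have hB0 : (0:ℝ) < B := by linarith
  have hA0 : (0:ℝ) < A := hA ▸ Real.exp_pos B
  have hL0 : (0:ℝ) < A / B := div_pos hA0 hB0
  have hlogB0 : 0 ≤ Real.log B := Real.log_nonneg (by linarith)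
  have hlogL : Real.log (A / B) = B - Real.log B := by
    rw [Real.log_div hA0.ne' hB0.ne', hA, Real.log_exp]
  have hhalf := logB_le_half hB2
  refine ⟨hA0, hL0, by rw [hlogL]; linarith, by rw [hlogL]; linarith,
    Real.rpow_pos_of_pos hL0 _, ?_, ?_⟩
  · rw [Real.log_rpow hL0]
    field_simp
  · rw [← Real.rpow_mul hL0.le, one_div, inv_mul_cancel₀ hσ1.ne', Real.rpow_one]

/-- Core upper bound: every term `p·A − τ'·p^σ·log p` is at most `ε·A·x`. -/
private lemma core_ub {σ τ' ε A B : ℝ} (hσ : 1 < σ) (hτ : 0 < τ') (hε : 0 < ε)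
    (hB2 : 2 ≤ B) (hA : A = Real.exp B)
    (hBε : 4 * (σ - 1) * (|Real.log ε| + 1) ≤ B)
    (hτε : 4 * (σ - 1) ≤ τ' * ε ^ (σ - 1)) (p : ℕ) :
    (p : ℝ) * A - τ' * (p : ℝ) ^ σ * Real.log p ≤ ε * A * (A / B) ^ (1 / (σ - 1)) := by
  have hσ1 : (0:ℝ) < σ - 1 := by linarith
  have hB0 : (0:ℝ) < B := by linarith
  obtain ⟨hA0, hL0, hlogL2, hlogLB, hx0, hlogx, hxσ⟩ := x_facts hσ hB2 hA
  set x : ℝ := (A / B) ^ (1 / (σ - 1)) with hxdef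
  rcases Nat.eq_zero_or_pos p with hp | hp
  · subst hp
    have hσ0 : σ ≠ 0 := ne_of_gt (by linarith)
    simp only [Nat.cast_zero, Real.zero_rpow hσ0, Real.log_zero, zero_mul, mul_zero, sub_zero]
    positivity
  have hp1 : (1:ℝ) ≤ (p:ℝ) := by exact_mod_cast hp
  have hp0c : (0:ℝ) < (p:ℝ) := by linarith
  have hlogp0 : 0 ≤ Real.log p := Real.log_nonneg hp1
  by_cases hc : (p:ℝ) ≤ ε * x
  · have h1 : (p:ℝ) * A ≤ ε * x * A := mul_le_mul_of_nonneg_right hc hA0.le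
    have h2 : 0 ≤ τ' * (p:ℝ) ^ σ * Real.log p := by positivity
    linarith
  · push_neg at hc
    have hεx0 : 0 < ε * x := by positivity
    have hc4 : (0:ℝ) ≤ 4 * (σ - 1) := by linarith
    have hkey : A ≤ τ' * ((p:ℝ) ^ (σ - 1) * Real.log p) := by
      have h1 : ε ^ (σ - 1) * (A / B) ≤ (p:ℝ) ^ (σ - 1) := by
        calc ε ^ (σ - 1) * (A / B) = (ε * x) ^ (σ - 1) := by
              rw [Real.mul_rpow hε.le hx0.le, hxσ]
          _ ≤ (p:ℝ) ^ (σ - 1) := Real.rpow_le_rpow hεx0.le hc.le hσ1.le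
      have h2 : B / (4 * (σ - 1)) ≤ Real.log p := by
        have hl1 : Real.log (ε * x) ≤ Real.log p := Real.log_le_log hεx0 hc.le
        rw [Real.log_mul hε.ne' hx0.ne'] at hl1
        have habs : -|Real.log ε| ≤ Real.log ε := neg_abs_le _
        rw [div_le_iff₀ (by positivity)]
        linarith [mul_le_mul_of_nonneg_left hl1 hc4, mul_le_mul_of_nonneg_left habs hc4,
          hlogx, hlogL2, hBε]
      have h5 : ε ^ (σ - 1) * (A / B) * (B / (4 * (σ - 1))) ≤ (p:ℝ) ^ (σ - 1) * Real.log p :=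
        mul_le_mul h1 h2 (by positivity) (Real.rpow_nonneg hp0c.le _)
      have h5' := mul_le_mul_of_nonneg_left h5 (by positivity : (0:ℝ) ≤ 4 * (σ - 1) * τ')
      have hLHS : 4 * (σ - 1) * τ' * (ε ^ (σ - 1) * (A / B) * (B / (4 * (σ - 1)))) =
          τ' * ε ^ (σ - 1) * A := by
        field_simp
      rw [hLHS] at h5'
      have h8 : 4 * (σ - 1) * A ≤ τ' * ε ^ (σ - 1) * A := mul_le_mul_of_nonneg_right hτε hA0.le
      have h9 : 4 * (σ - 1) * A ≤ 4 * (σ - 1) * (τ' * ((p:ℝ) ^ (σ - 1) * Real.log p)) := by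
        linarith
      have := le_of_mul_le_mul_left h9 (by positivity : (0:ℝ) < 4 * (σ - 1))
      linarith
    have hpσ : (p:ℝ) ^ (σ - 1) * (p:ℝ) = (p:ℝ) ^ σ := by
      have h := Real.rpow_add_one hp0c.ne' (σ - 1)
      rw [show σ - 1 + 1 = σ by ring] at h
      linarith [h]
    have h10 : (p:ℝ) * A ≤ (p:ℝ) * (τ' * ((p:ℝ) ^ (σ - 1) * Real.log p)) :=
      mul_le_mul_of_nonneg_left hkey hp0c.le
    have h11 : (p:ℝ) * (τ' * ((p:ℝ) ^ (σ - 1) * Real.log p)) = τ' * (p:ℝ) ^ σ * Real.log p := by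
      rw [← hpσ]; ring
    have h12 : 0 ≤ ε * A * x := by positivity
    linarith

/-- Getting the abstract setting from `k ≥ exp (exp B₀)`. -/
private lemma k_facts {B₀ k : ℝ} (hk : Real.exp (Real.exp B₀) ≤ k) :
    B₀ ≤ Real.log (Real.log k) ∧ Real.log k = Real.exp (Real.log (Real.log k)) ∧ 0 < k := by
  have hk0 : (0:ℝ) < k := lt_of_lt_of_le (Real.exp_pos _) hk
  have h1 : Real.exp B₀ ≤ Real.log k := by
    rw [← Real.log_exp (Real.exp B₀)]
    exact Real.log_le_log (Real.exp_pos _) hk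
  have hA0 : 0 < Real.log k := lt_of_lt_of_le (Real.exp_pos _) h1
  have h2 : B₀ ≤ Real.log (Real.log k) := by
    rw [← Real.log_exp B₀]
    exact Real.log_le_log (Real.exp_pos _) h1
  exact ⟨h2, (Real.exp_log hA0).symm, hk0⟩

set_option maxHeartbeats 1000000 in
/-- comparison of the decay `exp(−T_{τ,σ,h}(k))` with the
logarithmic-type decay `k^{−H (ln k / ln ln k)^{1/(σ−1)}}` in both directions. -/
theorem stmt7 (σ : ℝ) (hσ : 1 < σ) :
    (∀ τ h : ℝ, 0 < τ → 0 < h →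
      ∃ H C k₀ : ℝ, 0 < H ∧ 0 < C ∧ Real.exp (Real.exp 1) < k₀ ∧
        ∀ k : ℝ, k₀ ≤ k →
          Real.exp (-(AssocT τ σ h k)) ≤
            C * k ^ (-(H * (Real.log k / Real.log (Real.log k)) ^ (1 / (σ - 1))))) ∧
    (∀ H : ℝ, 0 < H →
      ∃ τ h C k₀ : ℝ, 0 < τ ∧ 0 < h ∧ 0 < C ∧ Real.exp (Real.exp 1) < k₀ ∧
        ∀ k : ℝ, k₀ ≤ k →
          k ^ (-(H * (Real.log k / Real.log (Real.log k)) ^ (1 / (σ - 1)))) ≤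
            C * Real.exp (-(AssocT τ σ h k))) := by
  have hσ1 : (0:ℝ) < σ - 1 := by linarith
  have hσ0 : σ ≠ 0 := ne_of_gt (by linarith : (0:ℝ) < σ)
  constructor
  · -- Part (i)
    intro τ h hτ hh
    set c₁ : ℝ := Real.log 2 + 1 / (σ - 1) with hc₁def
    have hlog2 : 0 < Real.log 2 := Real.log_pos (by norm_num)
    have hc₁ : 0 < c₁ := by positivity
    set M : ℝ := (2:ℝ) ^ σ * (τ * c₁ + |Real.log h|) with hMdef
    have hM : 0 < M := by
      have h1 : (0:ℝ) < (2:ℝ) ^ σ := Real.rpow_pos_of_pos two_pos σ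
      have h2 : 0 < τ * c₁ := by positivity
      have h3 : 0 ≤ |Real.log h| := abs_nonneg _
      positivity
    set δ : ℝ := min 1 ((1 / (2 * M)) ^ (1 / (σ - 1))) with hδdef
    have hδ0 : 0 < δ := lt_min one_pos (Real.rpow_pos_of_pos (by positivity) _)
    have hδ1 : δ ≤ 1 := min_le_left _ _
    have hδM : M * δ ^ (σ - 1) ≤ 1 / 2 := by
      have h1 : δ ^ (σ - 1) ≤ ((1 / (2 * M)) ^ (1 / (σ - 1))) ^ (σ - 1) :=
        Real.rpow_le_rpow hδ0.le (min_le_right _ _) hσ1.le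
      have h2 : ((1 / (2 * M)) ^ (1 / (σ - 1))) ^ (σ - 1) = 1 / (2 * M) := by
        rw [← Real.rpow_mul (by positivity), one_div (σ-1), inv_mul_cancel₀ hσ1.ne',
          Real.rpow_one]
      rw [h2] at h1
      calc M * δ ^ (σ - 1) ≤ M * (1 / (2 * M)) := mul_le_mul_of_nonneg_left h1 hM.le
        _ = 1 / 2 := by field_simp
    set ε₁ : ℝ := (8 * (σ - 1) / τ) ^ (1 / (σ - 1)) with hε₁def
    have hε₁ : 0 < ε₁ := Real.rpow_pos_of_pos (by positivity) _
    have hε₁id : τ / 2 * ε₁ ^ (σ - 1) = 4 * (σ - 1) := by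
      rw [hε₁def, ← Real.rpow_mul (by positivity), one_div (σ-1), inv_mul_cancel₀ hσ1.ne',
        Real.rpow_one]
      field_simp
      ring
    set B₀ : ℝ := max 2 (max (4 * (σ - 1) * (|Real.log ε₁| + 1))
      (2 * (σ - 1) * (|Real.log δ| + 1))) with hB₀def
    refine ⟨δ / 2, 1, Real.exp (Real.exp B₀), by positivity, one_pos, ?_, ?_⟩
    · exact Real.exp_lt_exp.mpr (Real.exp_lt_exp.mpr
        (lt_of_lt_of_le one_lt_two (le_max_left _ _)))
    intro k hk
    obtain ⟨hB₀B, hAeq, hk0⟩ := k_facts hk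
    set A : ℝ := Real.log k with hAdef
    set B : ℝ := Real.log A with hBdef
    have hB2 : 2 ≤ B := le_trans (le_max_left _ _) hB₀B
    have hB0 : (0:ℝ) < B := by linarith
    obtain ⟨hA0, hL0, hlogL2, hlogLB, hx0, hlogx, hxσ⟩ := x_facts hσ hB2 hAeq
    set x : ℝ := (A / B) ^ (1 / (σ - 1)) with hxdef
    have hBδ : 2 * (σ - 1) * (|Real.log δ| + 1) ≤ B :=
      le_trans (le_trans (le_max_right _ _) (le_max_right _ _)) hB₀B
    have hBε₁ : 4 * (σ - 1) * (|Real.log ε₁| + 1) ≤ B :=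
      le_trans (le_trans (le_max_left _ _) (le_max_right _ _)) hB₀B
    -- δ * x ≥ 1
    have hlogxδ : |Real.log δ| ≤ Real.log x := by
      have hstep : (σ - 1) * (|Real.log δ| + 1) ≤ (σ - 1) * Real.log x := by
        linarith
      have := le_of_mul_le_mul_left hstep hσ1
      linarith
    have hδx1 : 1 ≤ δ * x := by
      have h0 : 0 ≤ Real.log (δ * x) := by
        rw [Real.log_mul hδ0.ne' hx0.ne']
        linarith [neg_abs_le (Real.log δ)]
      calc (1:ℝ) = Real.exp 0 := Real.exp_zero.symm
        _ ≤ Real.exp (Real.log (δ * x)) := Real.exp_le_exp.mpr h0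
        _ = δ * x := Real.exp_log (by positivity)
    set p₀ : ℕ := ⌈δ * x⌉₊ with hp₀def
    have hp₀pos : 0 < p₀ := Nat.ceil_pos.mpr (by positivity)
    have hp₀l : δ * x ≤ (p₀:ℝ) := Nat.le_ceil _
    have hp₀u : (p₀:ℝ) ≤ 2 * (δ * x) := by
      have := Nat.ceil_lt_add_one (by positivity : (0:ℝ) ≤ δ * x)
      linarith
    have hp₀c : (0:ℝ) < (p₀:ℝ) := by positivity
    have hp₀1 : (1:ℝ) ≤ (p₀:ℝ) := by exact_mod_cast hp₀pos
    clear_value c₁ M δ ε₁ A B x p₀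
    -- bound log p₀
    have hlogp₀ : Real.log p₀ ≤ c₁ * B := by
      have h1 : Real.log (p₀:ℝ) ≤ Real.log (2 * x) := by
        apply Real.log_le_log hp₀c
        linarith [mul_le_mul_of_nonneg_right hδ1 hx0.le]
      rw [Real.log_mul two_ne_zero hx0.ne'] at h1
      have h2 : (σ - 1) * Real.log x ≤ B := by rw [hlogx]; exact hlogLB
      have h3 : Real.log x ≤ B / (σ - 1) := by
        rw [le_div_iff₀ hσ1]
        linarith
      have h4 : Real.log 2 ≤ Real.log 2 * B := by
        have := mul_nonneg hlog2.le (by linarith : (0:ℝ) ≤ B - 1)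
        linarith [this]
      have h5 : c₁ * B = Real.log 2 * B + B / (σ - 1) := by
        rw [hc₁def]
        field_simp
      linarith
    have hxσ' : x ^ σ = A / B * x := by
      have h := Real.rpow_add_one hx0.ne' (σ - 1)
      rw [show σ - 1 + 1 = σ by ring] at h
      rw [h, hxσ]
    have hp₀σ : (p₀:ℝ) ^ σ ≤ (2:ℝ) ^ σ * δ ^ σ * (A / B * x) := by
      have h1 : (p₀:ℝ) ^ σ ≤ (2 * (δ * x)) ^ σ :=
        Real.rpow_le_rpow hp₀c.le hp₀u (by positivity)
      have h2 : (2 * (δ * x)) ^ σ = (2:ℝ) ^ σ * (δ ^ σ * x ^ σ) := by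
        rw [Real.mul_rpow (by norm_num) (by positivity), Real.mul_rpow hδ0.le hx0.le]
      rw [h2, hxσ'] at h1
      linarith [h1]
    have hδσ : δ ^ σ = δ ^ (σ - 1) * δ := by
      have h := Real.rpow_add_one hδ0.ne' (σ - 1)
      rw [show σ - 1 + 1 = σ by ring] at h
      exact h
    have h2σ0 : (0:ℝ) < (2:ℝ) ^ σ := Real.rpow_pos_of_pos two_pos σ
    have hmain : δ / 2 * A * x ≤
        (p₀:ℝ) * A + (p₀:ℝ) ^ σ * Real.log h - τ * (p₀:ℝ) ^ σ * Real.log p₀ := by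
      have t1 : δ * x * A ≤ (p₀:ℝ) * A := mul_le_mul_of_nonneg_right hp₀l hA0.le
      have hPnn : 0 ≤ (p₀:ℝ) ^ σ := Real.rpow_nonneg hp₀c.le _
      have t2 : -((2:ℝ) ^ σ * δ ^ σ * (A / B * x) * |Real.log h|) ≤
          (p₀:ℝ) ^ σ * Real.log h := by
        have u1 := mul_le_mul_of_nonneg_right hp₀σ (abs_nonneg (Real.log h))
        have u2 := mul_le_mul_of_nonneg_left (neg_abs_le (Real.log h)) hPnn
        linarith
      have t4 : τ * (p₀:ℝ) ^ σ * Real.log p₀ ≤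
          τ * ((2:ℝ) ^ σ * δ ^ σ * (A / B * x)) * (c₁ * B) := by
        have hlnn : 0 ≤ Real.log (p₀:ℝ) := Real.log_nonneg hp₀1
        have u1 := mul_le_mul hp₀σ hlogp₀ hlnn (by positivity)
        have u2 := mul_le_mul_of_nonneg_left u1 hτ.le
        linarith
      have hABle : A / B ≤ A := by
        rw [div_le_iff₀ hB0]
        nlinarith
      have t5 : (2:ℝ) ^ σ * δ ^ σ * (A / B * x) * |Real.log h| ≤
          |Real.log h| * ((2:ℝ) ^ σ * δ ^ σ * (A * x)) := by
        have hcoef : (0:ℝ) ≤ (2:ℝ) ^ σ * δ ^ σ * x * |Real.log h| := by positivity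
        have := mul_le_mul_of_nonneg_left hABle hcoef
        linarith [this]
      have t6 : τ * ((2:ℝ) ^ σ * δ ^ σ * (A / B * x)) * (c₁ * B) =
          τ * c₁ * ((2:ℝ) ^ σ * δ ^ σ * (A * x)) := by
        field_simp
      have t7 : M * δ ^ σ * (A * x) ≤ δ / 2 * (A * x) := by
        have hAx : (0:ℝ) ≤ δ * (A * x) := by positivity
        have := mul_le_mul_of_nonneg_right hδM hAx
        rw [hδσ]
        linarith [this]
      have hMexp : τ * c₁ * ((2:ℝ) ^ σ * δ ^ σ * (A * x)) +
          |Real.log h| * ((2:ℝ) ^ σ * δ ^ σ * (A * x)) = M * δ ^ σ * (A * x) := by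
        rw [hMdef]; ring
      linarith
    -- boundedness of the family
    have hbdd : BddAbove (Set.range fun p : ℕ =>
        Real.log (h ^ ((p:ℝ) ^ σ) * k ^ p / (p:ℝ) ^ (τ * (p:ℝ) ^ σ))) := by
      set N : ℕ := ⌈Real.exp (2 * |Real.log h| / τ)⌉₊ with hNdef
      have hexpN : Real.exp (2 * |Real.log h| / τ) ≤ (N:ℝ) := Nat.le_ceil _
      clear_value N
      refine ⟨(N:ℝ) * A + (N:ℝ) ^ σ * |Real.log h| + ε₁ * A * x, ?_⟩
      rintro y ⟨p, rfl⟩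
      dsimp only
      rcases Nat.eq_zero_or_pos p with hp | hp
      · subst hp
        rw [term_zero hσ0]
        positivity
      have hp1 : (1:ℝ) ≤ (p:ℝ) := by exact_mod_cast hp
      have hpc : (0:ℝ) < (p:ℝ) := by linarith
      rw [term_eq τ σ hh hk0 hp.ne', ← hAdef]
      have hε₁Ax : 0 ≤ ε₁ * A * x := by positivity
      have hPnn : 0 ≤ (p:ℝ) ^ σ := Real.rpow_nonneg hpc.le _
      rcases le_or_gt p N with hpN | hpN
      · have hpNc : (p:ℝ) ≤ (N:ℝ) := by exact_mod_cast hpN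
        have e1 : (p:ℝ) * A ≤ (N:ℝ) * A := mul_le_mul_of_nonneg_right hpNc hA0.le
        have e2 : (p:ℝ) ^ σ * Real.log h ≤ (N:ℝ) ^ σ * |Real.log h| := by
          have hpow : (p:ℝ) ^ σ ≤ (N:ℝ) ^ σ := Real.rpow_le_rpow hpc.le hpNc (by positivity)
          have u1 := mul_le_mul_of_nonneg_left (le_abs_self (Real.log h)) hPnn
          have u2 := mul_le_mul_of_nonneg_right hpow (abs_nonneg (Real.log h))
          linarith
        have e3 : 0 ≤ τ * (p:ℝ) ^ σ * Real.log p := by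
          have hl := Real.log_nonneg hp1
          positivity
        linarith
      · have hNp : (N:ℝ) < (p:ℝ) := by exact_mod_cast hpN
        have hlogh : 2 * |Real.log h| / τ ≤ Real.log p := by
          calc 2 * |Real.log h| / τ
              = Real.log (Real.exp (2 * |Real.log h| / τ)) := (Real.log_exp _).symm
            _ ≤ Real.log p := Real.log_le_log (Real.exp_pos _) (by linarith)
        have habs : |Real.log h| ≤ τ / 2 * Real.log p := by
          rw [div_le_iff₀ hτ] at hlogh
          linarith
        have h5 : (p:ℝ) ^ σ * Real.log h - τ * (p:ℝ) ^ σ * Real.log p ≤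
            -(τ / 2 * ((p:ℝ) ^ σ * Real.log p)) := by
          have u1 := mul_le_mul_of_nonneg_left habs hPnn
          have u2 := mul_le_mul_of_nonneg_left (le_abs_self (Real.log h)) hPnn
          linarith
        have h6 := core_ub hσ (half_pos hτ) hε₁ hB2 hAeq hBε₁ (le_of_eq hε₁id.symm) p
        rw [← hxdef] at h6
        have e5 : 0 ≤ (N:ℝ) * A := by positivity
        have e6 : 0 ≤ (N:ℝ) ^ σ * |Real.log h| := by positivity
        have hlp : 0 ≤ Real.log (p:ℝ) := Real.log_nonneg hp1
        have h7 : 0 ≤ τ / 2 * ((p:ℝ) ^ σ * Real.log p) := by positivity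
        linarith
    -- conclude
    have hT : δ / 2 * A * x ≤ AssocT τ σ h k := by
      have hle := le_ciSup hbdd p₀
      rw [term_eq τ σ hh hk0 hp₀pos.ne', ← hAdef] at hle
      exact le_trans hmain hle
    have hrw : k ^ (-(δ / 2 * x)) = Real.exp (-(δ / 2 * A * x)) := by
      rw [Real.rpow_def_of_pos hk0, ← hAdef]
      congr 1
      ring
    rw [one_mul, hrw]
    exact Real.exp_le_exp.mpr (by linarith)
  · -- Part (ii)
    intro H hH
    set τ : ℝ := 4 * (σ - 1) / H ^ (σ - 1) with hτdef
    have hHσ : (0:ℝ) < H ^ (σ - 1) := Real.rpow_pos_of_pos hH _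
    have hτ0 : 0 < τ := by positivity
    have hτε : 4 * (σ - 1) ≤ τ * H ^ (σ - 1) := by
      rw [hτdef, div_mul_cancel₀ _ hHσ.ne']
    set B₀ : ℝ := max 2 (4 * (σ - 1) * (|Real.log H| + 1)) with hB₀def
    refine ⟨τ, 1, 1, Real.exp (Real.exp B₀), hτ0, one_pos, one_pos, ?_, ?_⟩
    · exact Real.exp_lt_exp.mpr (Real.exp_lt_exp.mpr
        (lt_of_lt_of_le one_lt_two (le_max_left _ _)))
    intro k hk
    obtain ⟨hB₀B, hAeq, hk0⟩ := k_facts hk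
    set A : ℝ := Real.log k with hAdef
    set B : ℝ := Real.log A with hBdef
    have hB2 : 2 ≤ B := le_trans (le_max_left _ _) hB₀B
    have hBH : 4 * (σ - 1) * (|Real.log H| + 1) ≤ B := le_trans (le_max_right _ _) hB₀B
    obtain ⟨hA0, hL0, hlogL2, hlogLB, hx0, hlogx, hxσ⟩ := x_facts hσ hB2 hAeq
    set x : ℝ := (A / B) ^ (1 / (σ - 1)) with hxdef
    clear_value A B x
    have hub : AssocT τ σ 1 k ≤ H * A * x := by
      apply ciSup_le
      intro p
      rcases Nat.eq_zero_or_pos p with hp | hp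
      · subst hp
        rw [term_zero hσ0]
        positivity
      rw [term_eq τ σ one_pos hk0 hp.ne', Real.log_one, mul_zero, add_zero, ← hAdef]
      have h6 := core_ub hσ hτ0 hH hB2 hAeq hBH hτε p
      rw [← hxdef] at h6
      exact h6
    have hrw : k ^ (-(H * x)) = Real.exp (-(H * A * x)) := by
      rw [Real.rpow_def_of_pos hk0, ← hAdef]
      congr 1
      ring
    rw [one_mul, hrw]
    exact Real.exp_le_exp.mpr (by linarith)
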